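/- arXiv:1806.05657 — 2 statements merged into one kernel-verified Lean document; each statement's English description precedes it below -/
import Mathlib

section
/- Let G be a finite connected graph in which every vertex has even degree, and let r be a vertex. Then there exists a trail starting at r that ends at r without using all edges of G (i.e., the player can 'get stuck' at r before covering all edges) if and only if the graph G with vertex r deleted contains a cycle. -/
/-!
Deleting the edges of a closed trail keeps every degree even, and in a graph with even degrees
a maximal trail ending at `r` must also start at `r` (parity), having used every edge at `r`.

If a stuck trail at `r` misses an edge `ab`, then `r` is isolated once the trail's edges are
deleted, so a maximal closed trail through `ab` in what remains is a nonempty closed trail of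
`G - r`, which cannot exist in a forest. Conversely, deleting the edges of a cycle of `G - r`
keeps every edge at `r`, and a maximal closed trail at `r` in what remains is stuck at `r`
without having used the cycle.
-/

open Finset

namespace SimpleGraph

variable {V : Type*} {G : SimpleGraph V}

namespace Walk

theorem IsTrail.not_isAcyclic {u : V} {p : G.Walk u u} (hp : p.IsTrail) (hnil : ¬ p.Nil) :
    ¬ G.IsAcyclic := fun hG => hnil (isPath_iff_nil.mp ((hG.isPath_iff_isTrail p).mpr hp))

theorem IsTrail.not_isAcyclic_induce {s : Set V} {u : V} {p : G.Walk u u} (hp : p.IsTrail)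
    (hnil : ¬ p.Nil) (hs : ∀ x ∈ p.support, x ∈ s) : ¬ (G.induce s).IsAcyclic := by
  have hmap := p.map_induce hs
  exact IsTrail.not_isAcyclic (hmap ▸ hp).of_map fun h => hnil (hmap ▸ (nil_map_iff _).mpr h)

instance [DecidableEq V] {u v : V} (p : G.Walk u v) : DecidablePred (· ∈ p.edgeSet) :=
  fun e => inferInstanceAs (Decidable (e ∈ p.edges))

variable [Fintype V] [DecidableEq V] [DecidableRel G.Adj]

theorem IsTrail.countP_edges_add_degree_deleteEdges {u v : V} {p : G.Walk u v}
    (hp : p.IsTrail) (x : V) :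
    p.edges.countP (x ∈ ·) + (G.deleteEdges p.edgeSet).degree x = G.degree x := by
  have hcount : p.edges.countP (x ∈ ·) = #{e ∈ G.incidenceFinset x | e ∈ p.edges} := by
    rw [List.countP_eq_length_filter, ← List.toFinset_card_of_nodup (hp.edges_nodup.filter _)]
    congr 1
    ext e
    simp only [List.mem_toFinset, List.mem_filter, decide_eq_true_eq, mem_filter,
      mem_incidenceFinset]
    exact ⟨fun ⟨he, hx⟩ => ⟨⟨p.edges_subset_edgeSet he, hx⟩, he⟩, fun ⟨⟨_, hx⟩, he⟩ => ⟨he, hx⟩⟩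
  have hdeg : (G.deleteEdges p.edgeSet).degree x = #{e ∈ G.incidenceFinset x | e ∉ p.edges} := by
    rw [← card_incidenceFinset_eq_degree]
    congr 1
    ext e
    simp [incidenceSet, edgeSet_deleteEdges, and_right_comm]
  rw [hcount, hdeg, card_filter_add_card_filter_not, card_incidenceFinset_eq_degree]

theorem IsTrail.even_degree_deleteEdges {u : V} {p : G.Walk u u} (hp : p.IsTrail)
    (heven : ∀ x, Even (G.degree x)) (x : V) : Even ((G.deleteEdges p.edgeSet).degree x) := by
  have hx := heven x
  rw [← hp.countP_edges_add_degree_deleteEdges x, Nat.even_add] at hx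
  exact hx.mp ((hp.even_countP_edges_iff x).mpr fun h => absurd rfl h)

theorem IsTrail.countP_edges_eq_degree {u v : V} {p : G.Walk u v} (hp : p.IsTrail) {x : V}
    (hx : ∀ e ∈ G.edgeSet, x ∈ e → e ∈ p.edges) : p.edges.countP (x ∈ ·) = G.degree x := by
  have hiso : (G.deleteEdges p.edgeSet).degree x = 0 := by
    rw [degree_eq_zero]
    intro y hy
    rw [deleteEdges_adj] at hy
    exact hy.2 (hx _ hy.1 (Sym2.mem_mk_left x y))
  simpa [hiso] using hp.countP_edges_add_degree_deleteEdges x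

end Walk

section
variable [Fintype V]

theorem exists_isTrail_forall_mem_edges (r : V) :
    ∃ v, ∃ p : G.Walk v r, p.IsTrail ∧ ∀ e ∈ G.edgeSet, v ∈ e → e ∈ p.edges := by
  by_contra! hext
  -- otherwise every trail extends, and trails would outnumber the edges in length
  have hlong : ∀ n, ∃ v, ∃ p : G.Walk v r, p.IsTrail ∧ p.length = n := by
    intro n
    induction n with
    | zero => exact ⟨r, .nil, by simp, rfl⟩
    | succ n ih =>
      obtain ⟨v, p, hp, rfl⟩ := ih
      obtain ⟨e, he, hve, hep⟩ := hext v p hp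
      induction e using Sym2.inductionOn with | _ a b => ?_
      obtain rfl | rfl := Sym2.mem_iff.mp hve
      · refine ⟨b, .cons (G.adj_symm he) p, ?_, rfl⟩
        rw [Walk.isTrail_cons, Sym2.eq_swap]
        exact ⟨hp, hep⟩
      · exact ⟨a, .cons he p, (Walk.isTrail_cons _ _).mpr ⟨hp, hep⟩, rfl⟩
  obtain ⟨v, p, hp, hlen⟩ := hlong (Fintype.card (Sym2 V) + 1)
  have := hp.edges_nodup.length_le_card
  rw [Walk.length_edges, hlen] at this
  omega

variable [DecidableEq V] [DecidableRel G.Adj]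

theorem exists_isTrail_closed_forall_mem_edges (heven : ∀ x, Even (G.degree x)) (r : V) :
    ∃ p : G.Walk r r, p.IsTrail ∧ ∀ e ∈ G.edgeSet, r ∈ e → e ∈ p.edges := by
  obtain ⟨v, p, hp, hv⟩ := G.exists_isTrail_forall_mem_edges r
  obtain rfl : v = r := by
    by_contra hvr
    have hodd := (hp.even_countP_edges_iff v).not.mpr (by simp [hvr])
    exact hodd (hp.countP_edges_eq_degree hv ▸ heven v)
  exact ⟨p, hp, hv⟩

theorem Walk.IsTrail.not_isAcyclic_induce_of_forall_mem_edges {r : V} {w : G.Walk r r}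
    (hw : w.IsTrail) (heven : ∀ x, Even (G.degree x))
    (hcover : ∀ e ∈ G.edgeSet, r ∈ e → e ∈ w.edges) {e : Sym2 V} (he : e ∈ G.edgeSet)
    (hew : e ∉ w.edges) : ¬ (G.induce {v | v ≠ r}).IsAcyclic := by
  induction e using Sym2.inductionOn with | _ a b => ?_
  obtain ⟨c, hc, hca⟩ := (G.deleteEdges w.edgeSet).exists_isTrail_closed_forall_mem_edges
    (hw.even_degree_deleteEdges heven) a
  have hnil : ¬ c.Nil := fun hnil => by
    simpa [hnil.eq_nil] using hca s(a, b) ((edgeSet_deleteEdges _).ge ⟨he, hew⟩)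
      (Sym2.mem_mk_left a b)
  have hsupp : ∀ x ∈ c.support, x ∈ {v | v ≠ r} := by
    rintro x hx rfl
    obtain ⟨e, hec, hxe⟩ := (Walk.mem_support_iff_exists_mem_edges_of_not_nil hnil).mp hx
    have heH := (edgeSet_deleteEdges _).le (c.edges_subset_edgeSet hec)
    exact heH.2 (hcover e heH.1 hxe)
  refine (hc.mapLe (deleteEdges_le _)).not_isAcyclic_induce ((Walk.nil_map_iff _).not.mpr hnil) ?_
  rwa [Walk.support_mapLe_eq_support]

theorem exists_isTrail_not_mem_edges_of_not_isAcyclic_induce (heven : ∀ x, Even (G.degree x))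
    {r : V} (hcyc : ¬ (G.induce {v | v ≠ r}).IsAcyclic) :
    ∃ w : G.Walk r r, w.IsTrail ∧ (∃ e ∈ G.edgeSet, e ∉ w.edges) ∧
      ∀ e ∈ G.edgeSet, r ∈ e → e ∈ w.edges := by
  obtain ⟨x, c, hc⟩ : ∃ x, ∃ c : (G.induce {v | v ≠ r}).Walk x x, c.IsCycle := by
    simpa [IsAcyclic] using hcyc
  set C := c.map (Embedding.induce {v | v ≠ r}).toHom
  have hC : C.IsCycle := hc.map (Embedding.induce (G := G) _).injective
  have hCr : ∀ e ∈ C.edges, r ∉ e := by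
    intro _ he hre
    rw [Walk.edges_map, List.mem_map] at he
    obtain ⟨e, -, rfl⟩ := he
    obtain ⟨y, -, hy⟩ := Sym2.mem_map.mp hre
    exact y.2 hy
  obtain ⟨w, hw, hcover⟩ := (G.deleteEdges C.edgeSet).exists_isTrail_closed_forall_mem_edges
    (hC.isTrail.even_degree_deleteEdges heven) r
  have he := Walk.mk_start_snd_mem_edges hC.not_nil
  refine ⟨w.mapLe (deleteEdges_le _), hw.mapLe _, ⟨_, C.edges_subset_edgeSet he, ?_⟩, ?_⟩
  · rw [Walk.edges_mapLe_eq_edges]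
    exact fun hew => ((edgeSet_deleteEdges _).le (w.edges_subset_edgeSet hew)).2 he
  · intro e he hre
    rw [Walk.edges_mapLe_eq_edges]
    exact hcover e ((edgeSet_deleteEdges _).ge ⟨he, fun h => hCr e h hre⟩) hre

end

end SimpleGraph

theorem stmt_3_general {V : Type} [Fintype V] [DecidableEq V] (G : SimpleGraph V)
    [DecidableRel G.Adj] (heven : ∀ v : V, Even (G.degree v))
    (r : V) :
    (∃ w : G.Walk r r, w.IsTrail ∧ (∃ e ∈ G.edgeSet, e ∉ w.edges) ∧
      (∀ e ∈ G.edgeSet, r ∈ e → e ∈ w.edges)) ↔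
    ¬ (G.induce {v : V | v ≠ r}).IsAcyclic :=
  ⟨fun ⟨_, hw, ⟨_, he, hew⟩, hcover⟩ =>
    hw.not_isAcyclic_induce_of_forall_mem_edges heven hcover he hew,
   G.exists_isTrail_not_mem_edges_of_not_isAcyclic_induce heven⟩

/-- In a finite connected Eulerian graph, there is a closed trail at `r` that uses all
edges incident to `r` but not all edges of `G` (the player can "get stuck" at `r`)
iff `G` minus the vertex `r` contains a cycle. -/
theorem stmt_3 {V : Type} [Fintype V] [DecidableEq V] (G : SimpleGraph V)
    [DecidableRel G.Adj] (hG : G.Connected) (heven : ∀ v : V, Even (G.degree v))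
    (r : V) :
    (∃ w : G.Walk r r, w.IsTrail ∧ (∃ e ∈ G.edgeSet, e ∉ w.edges) ∧
      (∀ e ∈ G.edgeSet, r ∈ e → e ∈ w.edges)) ↔
    ¬ (G.induce {v : V | v ≠ r}).IsAcyclic :=
  stmt_3_general G heven r
end

section
/- If a finite connected graph G has an Eulerian circuit and r is a vertex such that G − r is a forest (contains no cycle), then every maximal trail in G starting at r is an Eulerian circuit (i.e., Red cannot 'get stuck' without capturing all pieces). -/
/-!
A maximal trail from `r` uses every edge at its final vertex; as all degrees are even, this forces
the trail to be closed. Deleting the edges of a closed trail keeps all degrees even, and since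
the trail is stuck at `r`, what remains has no edge at `r`, so it lives inside `G - r` and is a
forest. A forest with an edge has a leaf, a vertex of odd degree; hence nothing remains and the
trail is Eulerian.
-/

open Finset SimpleGraph Walk

namespace SimpleGraph

variable {V : Type*} {G : SimpleGraph V}

theorem IsAcyclic.of_induce {s : Set V} (h : (G.induce s).IsAcyclic) (hs : G.support ⊆ s) :
    G.IsAcyclic := by
  intro u c hc
  have hcs : ∀ x ∈ c.support, x ∈ s := fun x hx =>
    hs (mem_support_of_mem_walk_support c hc.not_nil hx)
  refine h (c.induce s hcs) ?_
  rwa [← isCycle_map_iff_of_injective (f := (Embedding.induce s).toHom) Subtype.val_injective,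
    map_induce]

theorem Walk.notMem_support_deleteEdges_edgeSet {u v x : V} {p : G.Walk u v}
    (hx : ∀ w, G.Adj x w → s(x, w) ∈ p.edges) : x ∉ (G.deleteEdges p.edgeSet).support :=
  fun ⟨w, hxw⟩ => (deleteEdges_adj.mp hxw).2 (hx w (deleteEdges_adj.mp hxw).1)

section Finite

variable [Fintype V] [DecidableRel G.Adj]

/-- The endpoint of a longest path is a leaf. -/
theorem IsAcyclic.exists_degree_eq_one (hG : G.IsAcyclic) {a b : V} (hab : G.Adj a b) :
    ∃ v, G.degree v = 1 := by
  have : Nonempty V := ⟨a⟩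
  obtain ⟨u, v, p, hp, hmax⟩ := Walk.exists_isPath_forall_isPath_length_le_length G
  have hnil : ¬p.Nil := by
    have := hmax a b hab.toWalk (by simp [hab.ne])
    rw [Walk.not_nil_iff_lt_length]
    simp only [Walk.length_cons, Walk.length_nil] at this
    omega
  refine ⟨u, degree_eq_one_iff_existsUnique_adj.mpr ⟨p.snd, p.adj_snd hnil, fun w huw => ?_⟩⟩
  by_contra hw
  have hwp : w ∉ p.support := fun h => hw (hG.eq_snd_of_adj_start hp huw h)
  have := hmax _ _ (p.cons huw.symm) (hp.cons hwp)
  simp at this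

theorem IsAcyclic.eq_bot_of_forall_even_degree (hG : G.IsAcyclic)
    (heven : ∀ v, Even (G.degree v)) : G = ⊥ := by
  by_contra hne
  obtain ⟨a, b, hab⟩ := ne_bot_iff_exists_adj.mp hne
  obtain ⟨v, hv⟩ := hG.exists_degree_eq_one hab
  exact Nat.not_even_one (hv ▸ heven v)

variable [DecidableEq V]

theorem Walk.IsTrail.degree_deleteEdges_add_countP {u v : V} {p : G.Walk u v} (hp : p.IsTrail)
    (x : V) [Fintype ((G.deleteEdges p.edgeSet).neighborSet x)] :
    (G.deleteEdges p.edgeSet).degree x + p.edges.countP (x ∈ ·) = G.degree x := by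
  have hdel : (G.deleteEdges p.edgeSet).incidenceFinset x =
      (G.incidenceFinset x).filter (· ∉ p.edges) := by
    ext e
    rw [mem_incidenceFinset, mem_filter, mem_incidenceFinset]
    simp only [incidenceSet, edgeSet, edgeSet_deleteEdges, Set.mem_sdiff, Set.mem_ofPred_eq]
    tauto
  have htrail : (G.incidenceFinset x).filter (· ∈ p.edges) = hp.edgesFinset.filter (x ∈ ·) := by
    ext e
    simp only [mem_filter, mem_incidenceFinset, incidenceSet, Set.mem_sep_iff]
    exact ⟨fun ⟨⟨_, hx⟩, he⟩ => ⟨he, hx⟩, fun ⟨he, hx⟩ => ⟨⟨p.edges_subset_edgeSet he, hx⟩, he⟩⟩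
  have hcount : p.edges.countP (x ∈ ·) = #(hp.edgesFinset.filter (x ∈ ·)) := by
    rw [List.countP_eq_length_filter]
    rfl
  rw [← card_incidenceFinset_eq_degree, ← card_incidenceFinset_eq_degree, hdel, hcount,
    ← htrail, add_comm, card_filter_add_card_filter_not]

theorem Walk.IsTrail.even_degree_deleteEdges_s14 {u : V} {p : G.Walk u u} (hp : p.IsTrail)
    (heven : ∀ x, Even (G.degree x)) (x : V)
    [Fintype ((G.deleteEdges p.edgeSet).neighborSet x)] :
    Even ((G.deleteEdges p.edgeSet).degree x) := by
  have hcount : Even (p.edges.countP (x ∈ ·)) :=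
    (hp.even_countP_edges_iff x).mpr fun h => absurd rfl h
  have hdeg := heven x
  rw [← hp.degree_deleteEdges_add_countP x] at hdeg
  exact (Nat.even_add.mp hdeg).mpr hcount

theorem Walk.IsTrail.eq_of_forall_adj_mem_edges {u v : V} {p : G.Walk u v} (hp : p.IsTrail)
    (heven : ∀ x, Even (G.degree x)) (hmax : ∀ w, G.Adj v w → s(v, w) ∈ p.edges) : v = u := by
  classical
  have hcount : Even (p.edges.countP (v ∈ ·)) := by
    have hdeg := hp.degree_deleteEdges_add_countP v
    rw [((G.deleteEdges p.edgeSet).degree_eq_zero_iff_notMem_support v).mpr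
      (notMem_support_deleteEdges_edgeSet hmax), zero_add] at hdeg
    exact hdeg ▸ heven v
  by_contra hne
  exact ((hp.even_countP_edges_iff v).mp hcount (Ne.symm hne)).2 rfl

end Finite

end SimpleGraph

theorem stmt_14_general {V : Type} [Fintype V] [DecidableEq V] (G : SimpleGraph V)
    [DecidableRel G.Adj] (heven : ∀ v : V, Even (G.degree v))
    (r : V) (hforest : (G.induce {x : V | x ≠ r}).IsAcyclic) :
    ∀ (v : V) (w : G.Walk r v), w.IsTrail →
      (∀ u : V, G.Adj v u → s(v, u) ∈ w.edges) → w.IsEulerian := by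
  classical
  intro v w hw hmax
  obtain rfl := hw.eq_of_forall_adj_mem_edges heven hmax
  set H := G.deleteEdges w.edgeSet
  have hHv : v ∉ H.support := notMem_support_deleteEdges_edgeSet hmax
  have hHacyclic : H.IsAcyclic :=
    (hforest.anti (G := H.induce _) fun _ _ hadj => G.deleteEdges_le _ hadj).of_induce
      fun x hx (hxv : x = v) => hHv (hxv ▸ hx)
  have hH : H = ⊥ :=
    hHacyclic.eq_bot_of_forall_even_degree fun x => hw.even_degree_deleteEdges_s14 heven x
  refine hw.isEulerian_of_forall_mem fun e he => by_contra fun hne => ?_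
  have heH : e ∈ H.edgeSet := by rw [edgeSet_deleteEdges]; exact ⟨he, hne⟩
  simp [hH] at heH

/-- If a finite connected graph `G` is Eulerian (all degrees even) and `G − r` is a
forest, then every maximal trail starting at `r` (no unused edge at its final vertex)
is an Eulerian circuit. -/
theorem stmt_14 {V : Type} [Fintype V] [DecidableEq V] (G : SimpleGraph V)
    [DecidableRel G.Adj] (hG : G.Connected) (heven : ∀ v : V, Even (G.degree v))
    (r : V) (hforest : (G.induce {x : V | x ≠ r}).IsAcyclic) :
    ∀ (v : V) (w : G.Walk r v), w.IsTrail →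
      (∀ u : V, G.Adj v u → s(v, u) ∈ w.edges) → w.IsEulerian :=
  stmt_14_general G heven r hforest
end
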